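/- Let A and B be Banach algebras and suppose that B contains a nonzero idempotent element. If the projective tensor product Banach algebra A ⊗̂ B is strong pseudo-amenable, then A is strong pseudo-amenable. -/

import Mathlib

noncomputable section

open ContinuousLinearMap NormedSpace

/-- A directed index system for nets. -/
structure DirSys : Type 1 where
  ι : Type
  le : ι → ι → Prop
  refl : ∀ i, le i i
  trans : ∀ {i j k}, le i j → le j k → le i k
  nonempty : Nonempty ι
  directed : ∀ i j, ∃ k, le i k ∧ le j k

/-- Convergence of a net indexed by a directed system, in a (pseudo)metric space. -/
def DirSys.Tendsto (D : DirSys) {X : Type*} [PseudoMetricSpace X] (m : D.ι → X) (x : X) : Prop :=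
  ∀ ε : ℝ, 0 < ε → ∃ i, ∀ j, D.le i j → dist (m j) x < ε

variable (A : Type*) [NonUnitalNormedRing A] [NormedSpace ℂ A]
  [IsScalarTower ℂ A A] [SMulCommClass ℂ A A]

/-- The continuous bilinear forms on `A`, i.e. the dual space of the projective tensor
product `A ⊗̂ A`. -/
abbrev BilForms := A →L[ℂ] StrongDual ℂ A

/-- The bidual `(A ⊗̂ A)**` of the projective tensor product, realized concretely as the
dual space of the space of continuous bilinear forms on `A` (the latter being canonically,
isometrically, the dual of `A ⊗̂ A`). -/
abbrev TensorBidual := StrongDual ℂ (BilForms A)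

/-- The bidual `A**` of `A`. -/
abbrev Bidual := StrongDual ℂ (StrongDual ℂ A)

instance TensorBidual.instNormedAddCommGroup : NormedAddCommGroup (TensorBidual A) :=
  @ContinuousLinearMap.toNormedAddCommGroup ℂ ℂ (BilForms A) ℂ _ _ _ _ _ _ _ _

instance TensorBidual.instNormedSpace : NormedSpace ℂ (TensorBidual A) :=
  ContinuousLinearMap.toNormedSpace (E := BilForms A) (F := ℂ) (σ₁₂ := RingHom.id ℂ) (𝕜' := ℂ)

variable {A}

/-- The elementary tensor `x ⊗ y`, viewed inside `(A ⊗̂ A)**` via the canonical isometric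
embedding of `A ⊗̂ A` into its bidual. -/
def elemT (x y : A) : TensorBidual A :=
  (ContinuousLinearMap.apply ℂ ℂ y).comp (ContinuousLinearMap.apply ℂ (StrongDual ℂ A) x)

variable (A)

/-- The canonical isometric copy of `A ⊗̂ A` inside its bidual: the closure of the linear
span of the elementary tensors. -/
def ptp : Submodule ℂ (TensorBidual A) :=
  (Submodule.span ℂ {m : TensorBidual A | ∃ x y : A, m = elemT x y}).topologicalClosure

/-- The map `f ↦ f·a` on bilinear forms, `(f·a)(x,y) = f(ax, y)`; predual of the left
module action of `A` on `(A ⊗̂ A)**`. -/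
def leftBil (a : A) : BilForms A →L[ℂ] BilForms A :=
  (compL ℂ A A (StrongDual ℂ A)).flip (ContinuousLinearMap.mul ℂ A a)

/-- The map `f ↦ a·f` on bilinear forms, `(a·f)(x,y) = f(x, ya)`; predual of the right
module action of `A` on `(A ⊗̂ A)**`. -/
def rightBil (a : A) : BilForms A →L[ℂ] BilForms A :=
  compL ℂ A (StrongDual ℂ A) (StrongDual ℂ A)
    ((compL ℂ A A ℂ).flip ((ContinuousLinearMap.mul ℂ A).flip a))

variable {A}

/-- The left module action `a · m` of `A` on `(A ⊗̂ A)**`, extending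
`a · (x ⊗ y) = (a x) ⊗ y`. -/
def tsmulL (a : A) (m : TensorBidual A) : TensorBidual A := m.comp (leftBil A a)

/-- The right module action `m · a` of `A` on `(A ⊗̂ A)**`, extending
`(x ⊗ y) · a = x ⊗ (y a)`. -/
def tsmulR (a : A) (m : TensorBidual A) : TensorBidual A := m.comp (rightBil A a)

variable (A)

/-- The adjoint `π_A* : A* → (A ⊗̂ A)*` of the product morphism `π_A`, namely
`(π_A* f)(x, y) = f (x y)`. -/
def piStar : StrongDual ℂ A →L[ℂ] BilForms A :=
  ((compL ℂ A (A →L[ℂ] A) (StrongDual ℂ A)).flip (ContinuousLinearMap.mul ℂ A)).comp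
    (compL ℂ A A ℂ)

variable {A}

/-- The second adjoint `π_A** : (A ⊗̂ A)** → A**` of the product morphism. -/
def piSS (m : TensorBidual A) : Bidual A := m.comp (piStar A)

variable (A)

/-- The map `f ↦ f·a` on `A*`, `(f·a)(x) = f(ax)`. -/
def dualROp (a : A) : StrongDual ℂ A →L[ℂ] StrongDual ℂ A :=
  (compL ℂ A A ℂ).flip (ContinuousLinearMap.mul ℂ A a)

/-- The map `f ↦ a·f` on `A*`, `(a·f)(x) = f(xa)`. -/
def dualLOp (a : A) : StrongDual ℂ A →L[ℂ] StrongDual ℂ A :=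
  (compL ℂ A A ℂ).flip ((ContinuousLinearMap.mul ℂ A).flip a)

variable {A}

/-- The product `a · Φ` of `a ∈ A` and `Φ ∈ A**`: `(a·Φ)(f) = Φ(f·a)`. -/
def bsmulL (a : A) (Φ : Bidual A) : Bidual A := Φ.comp (dualROp A a)

/-- The product `Φ · a` of `Φ ∈ A**` and `a ∈ A`: `(Φ·a)(f) = Φ(a·f)`. -/
def bsmulR (a : A) (Φ : Bidual A) : Bidual A := Φ.comp (dualLOp A a)

/-- The canonical isometric embedding of `A` into its bidual. -/
def inclB (a : A) : Bidual A := NormedSpace.inclusionInDoubleDual ℂ A a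

variable (A)

/-- A Banach algebra `A` is *strong pseudo-amenable* if there is a (not necessarily bounded)
net `(m_α)` in `(A ⊗̂ A)**` such that `a·m_α − m_α·a → 0` and
`a·π_A**(m_α) = π_A**(m_α)·a → a` for every `a ∈ A`. -/
def StrongPseudoAmenable : Prop :=
  ∃ (D : DirSys) (m : D.ι → TensorBidual A),
    (∀ a : A, D.Tendsto (fun α => tsmulL a (m α) - tsmulR a (m α)) 0) ∧
    (∀ (a : A) (α : D.ι), bsmulL a (piSS (m α)) = bsmulR a (piSS (m α))) ∧
    (∀ a : A, D.Tendsto (fun α => bsmulR a (piSS (m α))) (inclB a))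

/-- A Banach algebra `A` is *pseudo-amenable* if there is a (not necessarily bounded)
net `(m_α)` in `A ⊗̂ A` such that `a·m_α − m_α·a → 0` and `π_A(m_α)a → a` for every `a ∈ A`. -/
def PseudoAmenable : Prop :=
  ∃ (D : DirSys) (m : D.ι → TensorBidual A),
    (∀ α, m α ∈ ptp A) ∧
    (∀ a : A, D.Tendsto (fun α => tsmulL a (m α) - tsmulR a (m α)) 0) ∧
    (∀ a : A, D.Tendsto (fun α => bsmulR a (piSS (m α))) (inclB a))

/-- A Banach algebra `A` is *pseudo-contractible* if there is a net `(m_α)` in `A ⊗̂ A`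
such that `a·m_α = m_α·a` and `π_A(m_α)a → a` for every `a ∈ A`. -/
def PseudoContractible : Prop :=
  ∃ (D : DirSys) (m : D.ι → TensorBidual A),
    (∀ α, m α ∈ ptp A) ∧
    (∀ (a : A) (α : D.ι), tsmulL a (m α) = tsmulR a (m α)) ∧
    (∀ a : A, D.Tendsto (fun α => bsmulR a (piSS (m α))) (inclB a))

/-- A Banach algebra `A` is *amenable* if it has a bounded approximate diagonal: a bounded
net `(m_α)` in `A ⊗̂ A` such that `a·m_α − m_α·a → 0` and `π_A(m_α)a → a` for every `a ∈ A`. -/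
def AmenableBanachAlgebra : Prop :=
  ∃ (D : DirSys) (m : D.ι → TensorBidual A) (C : ℝ),
    (∀ α, m α ∈ ptp A) ∧
    (∀ α, ‖m α‖ ≤ C) ∧
    (∀ a : A, D.Tendsto (fun α => tsmulL a (m α) - tsmulR a (m α)) 0) ∧
    (∀ a : A, D.Tendsto (fun α => bsmulR a (piSS (m α))) (inclB a))

end

/-- `(C, t)` is a realization of the projective tensor product `A ⊗̂ B` of Banach spaces:
`t` is bilinear and contractive, elementary tensors have dense linear span, and `C` has the
universal (isometric) extension property for bounded bilinear maps into Banach spaces.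
These properties determine `C` up to isometric isomorphism. -/
def IsProjectiveTensorProduct (A B C : Type)
    [NormedAddCommGroup A] [NormedSpace ℂ A] [NormedAddCommGroup B] [NormedSpace ℂ B]
    [NormedAddCommGroup C] [NormedSpace ℂ C] (t : A → B → C) : Prop :=
  (∀ a a' : A, ∀ b : B, t (a + a') b = t a b + t a' b) ∧
  (∀ a : A, ∀ b b' : B, t a (b + b') = t a b + t a b') ∧
  (∀ (c : ℂ) (a : A) (b : B), t (c • a) b = c • t a b) ∧
  (∀ (c : ℂ) (a : A) (b : B), t a (c • b) = c • t a b) ∧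
  (∀ (a : A) (b : B), ‖t a b‖ ≤ ‖a‖ * ‖b‖) ∧
  ((Submodule.span ℂ {x : C | ∃ a b, x = t a b}).topologicalClosure = ⊤) ∧
  (∀ (E : Type) [NormedAddCommGroup E] [NormedSpace ℂ E] [CompleteSpace E],
    ∀ (f : A → B → E) (M : ℝ),
    (∀ a a' : A, ∀ b : B, f (a + a') b = f a b + f a' b) →
    (∀ a : A, ∀ b b' : B, f a (b + b') = f a b + f a b') →
    (∀ (c : ℂ) (a : A) (b : B), f (c • a) b = c • f a b) →
    (∀ (c : ℂ) (a : A) (b : B), f a (c • b) = c • f a b) →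
    (∀ (a : A) (b : B), ‖f a b‖ ≤ M * ‖a‖ * ‖b‖) →
    ∃ g : C →L[ℂ] E, ‖g‖ ≤ M ∧ ∀ a b, g (t a b) = f a b)

/-! Fix a nonzero idempotent `p ∈ B` and a functional `φ ∈ B*` with `φ p = 1` that only sees the
corner `pBp`, so that `φ (p b) = φ b = φ (b p)`. Let `q = id ⊗ φ : A ⊗̂ B → A` be the slice map and
`T : (A ⊗̂ A)* → ((A ⊗̂ B) ⊗̂ (A ⊗̂ B))*` the map `f ↦ f ⊗ (φ ∘ π_B)`. Both `T` and `q*` turn the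
actions of `a ∈ A` into those of `a ⊗ p`, and `T ∘ π_A* = π_{A ⊗̂ B}* ∘ q*`. Precomposing with `T`
a net witnessing the strong pseudo-amenability of `A ⊗̂ B` therefore gives one for `A`. -/

open ContinuousLinearMap

-- Without these, instance search fails on operator spaces such as `BilForms A →L[ℂ] BilForms C`.
noncomputable instance BilForms.instNormedAddCommGroup (A : Type*) [NonUnitalNormedRing A]
    [NormedSpace ℂ A] : NormedAddCommGroup (BilForms A) :=
  ContinuousLinearMap.toNormedAddCommGroup

noncomputable instance BilForms.instNormedSpace (A : Type*) [NonUnitalNormedRing A]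
    [NormedSpace ℂ A] : NormedSpace ℂ (BilForms A) :=
  ContinuousLinearMap.toNormedSpace

theorem DirSys.Tendsto.comp_continuousAt {D : DirSys} {X Y : Type*} [PseudoMetricSpace X]
    [PseudoMetricSpace Y] {u : D.ι → X} {x : X} {f : X → Y} (hu : D.Tendsto u x)
    (hf : ContinuousAt f x) : D.Tendsto (f ∘ u) (f x) := by
  intro ε hε
  obtain ⟨δ, hδ, hfδ⟩ := Metric.continuousAt_iff.mp hf ε hε
  obtain ⟨i, hi⟩ := hu δ hδ
  exact ⟨i, fun j hij => hfδ (hi j hij)⟩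

theorem IsIdempotentElem.exists_corner_dual_eq_one {𝕜 B : Type*} [RCLike 𝕜]
    [NonUnitalNormedRing B] [NormedSpace 𝕜 B] [IsScalarTower 𝕜 B B] [SMulCommClass 𝕜 B B]
    {p : B} (hp : IsIdempotentElem p) (hp0 : p ≠ 0) :
    ∃ φ : StrongDual 𝕜 B, φ p = 1 ∧ (∀ b, φ (p * b) = φ b) ∧ ∀ b, φ (b * p) = φ b := by
  obtain ⟨ψ, hψ⟩ := SeparatingDual.exists_eq_one (R := 𝕜) hp0
  refine ⟨ψ.comp (mulLeftRight 𝕜 B p p), ?_, fun b => ?_, fun b => ?_⟩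
  · simp [hp.eq, hψ]
  · simp [← mul_assoc, hp.eq]
  · simp [mul_assoc, hp.eq]

theorem StrongPseudoAmenable.of_intertwining {A C : Type*} [NonUnitalNormedRing A]
    [NormedSpace ℂ A] [IsScalarTower ℂ A A] [SMulCommClass ℂ A A] [NonUnitalNormedRing C]
    [NormedSpace ℂ C] [IsScalarTower ℂ C C] [SMulCommClass ℂ C C] (ι : A → C)
    (T : BilForms A →L[ℂ] BilForms C) (S : StrongDual ℂ A →L[ℂ] StrongDual ℂ C)
    (hleft : ∀ a, T ∘L leftBil A a = leftBil C (ι a) ∘L T)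
    (hright : ∀ a, T ∘L rightBil A a = rightBil C (ι a) ∘L T)
    (hpi : T ∘L piStar A = piStar C ∘L S)
    (hdualR : ∀ a, S ∘L dualROp A a = dualROp C (ι a) ∘L S)
    (hdualL : ∀ a, S ∘L dualLOp A a = dualLOp C (ι a) ∘L S)
    (hincl : ∀ a, inclB a = (inclB (ι a)).comp S) (hC : StrongPseudoAmenable C) :
    StrongPseudoAmenable A := by
  obtain ⟨D, m, hcomm, hcentral, hunit⟩ := hC
  have hpiSS (n : TensorBidual C) : piSS (n.comp T) = (piSS n).comp S := by
    simp only [piSS, comp_assoc, hpi]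
  have hbsmulL (a : A) (Φ : Bidual C) : bsmulL a (Φ.comp S) = (bsmulL (ι a) Φ).comp S := by
    simp only [bsmulL, comp_assoc, hdualR]
  have hbsmulR (a : A) (Φ : Bidual C) : bsmulR a (Φ.comp S) = (bsmulR (ι a) Φ).comp S := by
    simp only [bsmulR, comp_assoc, hdualL]
  have hTcont : Continuous fun n : TensorBidual C => n.comp T :=
    ((compL ℂ (BilForms A) (BilForms C) ℂ).flip T).continuous
  have hScont : Continuous fun Φ : Bidual C => (Φ.comp S : Bidual A) :=
    ((compL ℂ (StrongDual ℂ A) (StrongDual ℂ C) ℂ).flip S).continuous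
  refine ⟨D, fun α => (m α).comp T, fun a => ?_, fun a α => ?_, fun a => ?_⟩
  · have h := (hcomm (ι a)).comp_continuousAt hTcont.continuousAt
    simpa [Function.comp_def, tsmulL, tsmulR, comp_assoc, hleft, hright, sub_comp] using h
  · rw [hpiSS, hbsmulL, hbsmulR, hcentral]
  · have h := (hunit (ι a)).comp_continuousAt (Y := Bidual A) hScont.continuousAt
    simpa [Function.comp_def, hpiSS, hbsmulR, ← hincl] using h

namespace IsProjectiveTensorProduct

section Lift

variable {A B C : Type} [NormedAddCommGroup A] [NormedSpace ℂ A] [NormedAddCommGroup B]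
  [NormedSpace ℂ B] [NormedAddCommGroup C] [NormedSpace ℂ C] {t : A → B → C}
  {E : Type} [NormedAddCommGroup E] [NormedSpace ℂ E]

theorem ext (ht : IsProjectiveTensorProduct A B C t) {g₁ g₂ : C →L[ℂ] E}
    (h : ∀ a b, g₁ (t a b) = g₂ (t a b)) : g₁ = g₂ :=
  ContinuousLinearMap.ext_on (Submodule.dense_iff_topologicalClosure_eq_top.mpr ht.2.2.2.2.2.1)
    (by rintro _ ⟨a, b, rfl⟩; exact h a b)

theorem ext₂ (ht : IsProjectiveTensorProduct A B C t) {g₁ g₂ : C →L[ℂ] C →L[ℂ] E}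
    (h : ∀ a b a' b', g₁ (t a b) (t a' b') = g₂ (t a b) (t a' b')) : g₁ = g₂ :=
  ht.ext fun a b => ht.ext fun a' b' => h a b a' b'

variable [CompleteSpace E]

theorem exists_lift (ht : IsProjectiveTensorProduct A B C t) (f : A →L[ℂ] B →L[ℂ] E) :
    ∃ g : C →L[ℂ] E, ‖g‖ ≤ ‖f‖ ∧ ∀ a b, g (t a b) = f a b :=
  ht.2.2.2.2.2.2 E (fun a b => f a b) ‖f‖ (by simp) (by simp) (by simp) (by simp) f.le_opNorm₂

noncomputable def lift (ht : IsProjectiveTensorProduct A B C t) (f : A →L[ℂ] B →L[ℂ] E) :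
    C →L[ℂ] E :=
  (ht.exists_lift f).choose

@[simp]
theorem lift_apply_tmul (ht : IsProjectiveTensorProduct A B C t) (f : A →L[ℂ] B →L[ℂ] E)
    (a : A) (b : B) : ht.lift f (t a b) = f a b :=
  (ht.exists_lift f).choose_spec.2 a b

theorem norm_lift_le (ht : IsProjectiveTensorProduct A B C t) (f : A →L[ℂ] B →L[ℂ] E) :
    ‖ht.lift f‖ ≤ ‖f‖ :=
  (ht.exists_lift f).choose_spec.1

noncomputable def liftL (ht : IsProjectiveTensorProduct A B C t) :
    (A →L[ℂ] B →L[ℂ] E) →L[ℂ] C →L[ℂ] E :=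
  LinearMap.mkContinuous
    { toFun := fun f : A →L[ℂ] B →L[ℂ] E => ht.lift f
      map_add' := fun f g => ht.ext fun a b => by simp
      map_smul' := fun c f => ht.ext fun a b => by simp }
    1 (by intro f; simpa using ht.norm_lift_le f)

@[simp]
theorem liftL_apply (ht : IsProjectiveTensorProduct A B C t) (f : A →L[ℂ] B →L[ℂ] E) :
    ht.liftL f = ht.lift f :=
  rfl

noncomputable def dualTensor (ht : IsProjectiveTensorProduct A B C t) :
    StrongDual ℂ A →L[ℂ] StrongDual ℂ B →L[ℂ] StrongDual ℂ C :=
  (compL ℂ (StrongDual ℂ B) (A →L[ℂ] StrongDual ℂ B) (StrongDual ℂ C) ht.liftL).comp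
    (smulRightL ℂ A (StrongDual ℂ B))

@[simp]
theorem dualTensor_apply_tmul (ht : IsProjectiveTensorProduct A B C t) (u : StrongDual ℂ A)
    (v : StrongDual ℂ B) (a : A) (b : B) : ht.dualTensor u v (t a b) = u a * v b := by
  simp [dualTensor]

noncomputable def bilFormTensor (ht : IsProjectiveTensorProduct A B C t)
    (β : B →L[ℂ] StrongDual ℂ B) : (A →L[ℂ] StrongDual ℂ A) →L[ℂ] C →L[ℂ] StrongDual ℂ C :=
  ht.liftL.comp <| compL ℂ A (StrongDual ℂ A) (B →L[ℂ] StrongDual ℂ C) <|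
    ((compL ℂ B (StrongDual ℂ B) (StrongDual ℂ C)).flip β).comp ht.dualTensor

@[simp]
theorem bilFormTensor_apply_tmul (ht : IsProjectiveTensorProduct A B C t)
    (β : B →L[ℂ] StrongDual ℂ B) (f : A →L[ℂ] StrongDual ℂ A) (a : A) (b : B) (a' : A)
    (b' : B) : ht.bilFormTensor β f (t a b) (t a' b') = f a a' * β b b' := by
  simp [bilFormTensor]

noncomputable def rightSlice [CompleteSpace A] (ht : IsProjectiveTensorProduct A B C t)
    (φ : StrongDual ℂ B) : C →L[ℂ] A :=
  ht.liftL (smulRightL ℂ B A φ)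

@[simp]
theorem rightSlice_apply_tmul [CompleteSpace A] (ht : IsProjectiveTensorProduct A B C t)
    (φ : StrongDual ℂ B) (a : A) (b : B) : ht.rightSlice φ (t a b) = φ b • a := by
  simp [rightSlice]

end Lift

variable {A B C : Type} [NonUnitalNormedRing A] [NormedSpace ℂ A] [NonUnitalNormedRing B]
  [NormedSpace ℂ B] [NonUnitalNormedRing C] [NormedSpace ℂ C] {t : A → B → C}
  {φ : StrongDual ℂ B} {p : B}

section Dual

variable [CompleteSpace A]

noncomputable def dualTransfer (ht : IsProjectiveTensorProduct A B C t) (φ : StrongDual ℂ B) :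
    StrongDual ℂ A →L[ℂ] StrongDual ℂ C :=
  (compL ℂ C A ℂ).flip (ht.rightSlice φ)

@[simp]
theorem dualTransfer_apply_tmul (ht : IsProjectiveTensorProduct A B C t) (φ : StrongDual ℂ B)
    (g : StrongDual ℂ A) (a : A) (b : B) : ht.dualTransfer φ g (t a b) = φ b * g a := by
  simp [dualTransfer]

theorem inclB_eq_comp_dualTransfer (ht : IsProjectiveTensorProduct A B C t) (hφ : φ p = 1)
    (a : A) : inclB a = (inclB (t a p)).comp (ht.dualTransfer φ) :=
  ContinuousLinearMap.ext fun g => by simp [inclB, hφ]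

variable [IsScalarTower ℂ A A] [SMulCommClass ℂ A A] [IsScalarTower ℂ C C] [SMulCommClass ℂ C C]

theorem dualTransfer_comp_dualROp (ht : IsProjectiveTensorProduct A B C t)
    (htmul : ∀ (a a' : A) (b b' : B), t a b * t a' b' = t (a * a') (b * b'))
    (hφ : ∀ b, φ (p * b) = φ b) (a : A) :
    ht.dualTransfer φ ∘L dualROp A a = dualROp C (t a p) ∘L ht.dualTransfer φ :=
  ContinuousLinearMap.ext fun g => ht.ext fun x b => by
    simp [dualROp, htmul, hφ]

theorem dualTransfer_comp_dualLOp (ht : IsProjectiveTensorProduct A B C t)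
    (htmul : ∀ (a a' : A) (b b' : B), t a b * t a' b' = t (a * a') (b * b'))
    (hφ : ∀ b, φ (b * p) = φ b) (a : A) :
    ht.dualTransfer φ ∘L dualLOp A a = dualLOp C (t a p) ∘L ht.dualTransfer φ :=
  ContinuousLinearMap.ext fun g => ht.ext fun x b => by
    simp [dualLOp, htmul, hφ]

end Dual

variable [IsScalarTower ℂ B B] [SMulCommClass ℂ B B]

noncomputable def bilFormTransfer (ht : IsProjectiveTensorProduct A B C t)
    (φ : StrongDual ℂ B) : BilForms A →L[ℂ] BilForms C :=
  ht.bilFormTensor ((compL ℂ B B ℂ φ).comp (mul ℂ B))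

@[simp]
theorem bilFormTransfer_apply_tmul (ht : IsProjectiveTensorProduct A B C t)
    (φ : StrongDual ℂ B) (f : BilForms A) (a : A) (b : B) (a' : A) (b' : B) :
    ht.bilFormTransfer φ f (t a b) (t a' b') = f a a' * φ (b * b') := by
  simp [bilFormTransfer]

variable [IsScalarTower ℂ A A] [SMulCommClass ℂ A A] [IsScalarTower ℂ C C] [SMulCommClass ℂ C C]

theorem bilFormTransfer_comp_leftBil (ht : IsProjectiveTensorProduct A B C t)
    (htmul : ∀ (a a' : A) (b b' : B), t a b * t a' b' = t (a * a') (b * b'))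
    (hφ : ∀ b, φ (p * b) = φ b) (a : A) :
    ht.bilFormTransfer φ ∘L leftBil A a = leftBil C (t a p) ∘L ht.bilFormTransfer φ :=
  ContinuousLinearMap.ext fun f => ht.ext₂ fun x b x' b' => by
    simp [leftBil, htmul, mul_assoc, hφ]

theorem bilFormTransfer_comp_rightBil (ht : IsProjectiveTensorProduct A B C t)
    (htmul : ∀ (a a' : A) (b b' : B), t a b * t a' b' = t (a * a') (b * b'))
    (hφ : ∀ b, φ (b * p) = φ b) (a : A) :
    ht.bilFormTransfer φ ∘L rightBil A a = rightBil C (t a p) ∘L ht.bilFormTransfer φ :=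
  ContinuousLinearMap.ext fun f => ht.ext₂ fun x b x' b' => by
    simp [rightBil, htmul, ← mul_assoc, hφ]

theorem bilFormTransfer_comp_piStar [CompleteSpace A] (ht : IsProjectiveTensorProduct A B C t)
    (htmul : ∀ (a a' : A) (b b' : B), t a b * t a' b' = t (a * a') (b * b')) :
    ht.bilFormTransfer φ ∘L piStar A = piStar C ∘L ht.dualTransfer φ :=
  ContinuousLinearMap.ext fun g => ht.ext₂ fun x b x' b' => by
    simp [piStar, htmul, mul_comm]

end IsProjectiveTensorProduct

theorem strongPseudoAmenable_of_projectiveTensorProduct_general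
    (A : Type) [NonUnitalNormedRing A] [NormedSpace ℂ A] [IsScalarTower ℂ A A]
    [SMulCommClass ℂ A A] [CompleteSpace A]
    (B : Type) [NonUnitalNormedRing B] [NormedSpace ℂ B] [IsScalarTower ℂ B B]
    [SMulCommClass ℂ B B]
    (hB : ∃ b : B, b * b = b ∧ b ≠ 0)
    (C : Type) [NonUnitalNormedRing C] [NormedSpace ℂ C] [IsScalarTower ℂ C C]
    [SMulCommClass ℂ C C]
    (t : A → B → C) (ht : IsProjectiveTensorProduct A B C t)
    (htmul : ∀ (a a' : A) (b b' : B), t a b * t a' b' = t (a * a') (b * b'))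
    (hC : StrongPseudoAmenable C) :
    StrongPseudoAmenable A := by
  obtain ⟨p, hp, hp0⟩ := hB
  obtain ⟨φ, hφp, hφl, hφr⟩ := IsIdempotentElem.exists_corner_dual_eq_one (𝕜 := ℂ) hp hp0
  exact hC.of_intertwining (fun a => t a p) (ht.bilFormTransfer φ) (ht.dualTransfer φ)
    (ht.bilFormTransfer_comp_leftBil htmul hφl) (ht.bilFormTransfer_comp_rightBil htmul hφr)
    (ht.bilFormTransfer_comp_piStar htmul) (ht.dualTransfer_comp_dualROp htmul hφl)
    (ht.dualTransfer_comp_dualLOp htmul hφr) (ht.inclB_eq_comp_dualTransfer hφp)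

/-- Let `A` and `B` be Banach algebras, `B` containing a nonzero
idempotent.  If the projective tensor product Banach algebra `A ⊗̂ B` is strong
pseudo-amenable, then `A` is strong pseudo-amenable. -/
theorem strongPseudoAmenable_of_projectiveTensorProduct
    (A : Type) [NonUnitalNormedRing A] [NormedSpace ℂ A] [IsScalarTower ℂ A A]
    [SMulCommClass ℂ A A] [CompleteSpace A]
    (B : Type) [NonUnitalNormedRing B] [NormedSpace ℂ B] [IsScalarTower ℂ B B]
    [SMulCommClass ℂ B B] [CompleteSpace B]
    (hB : ∃ b : B, b * b = b ∧ b ≠ 0)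
    (C : Type) [NonUnitalNormedRing C] [NormedSpace ℂ C] [IsScalarTower ℂ C C]
    [SMulCommClass ℂ C C] [CompleteSpace C]
    (t : A → B → C) (ht : IsProjectiveTensorProduct A B C t)
    (htmul : ∀ (a a' : A) (b b' : B), t a b * t a' b' = t (a * a') (b * b'))
    (hC : StrongPseudoAmenable C) :
    StrongPseudoAmenable A :=
  strongPseudoAmenable_of_projectiveTensorProduct_general A B hB C t ht htmul hC
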